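/- arXiv:math-ph/0501005 — 2 statements merged into one kernel-verified Lean document; each statement's English description precedes it below -/
import Mathlib

section
/- Let A, B ∈ SL(2,ℝ). For M ∈ {A, B, AB, BA}, suppose (u⁺_M, u⁻_M, v⁺_M, v⁻_M) is a singular frame for M, i.e., u⁺_M ⟂ u⁻_M and v⁺_M ⟂ v⁻_M are unit vectors in ℝ² with M u⁺_M = ‖M‖ v⁺_M and M u⁻_M = ‖M‖^{−1} v⁻_M. Then: |B u⁻_{AB} ∧ u⁻_A| ≤ ‖A‖^{−2}‖B‖, |u⁻_{BA} ∧ u⁻_A| ≤ ‖A‖^{−2}‖B‖², |v⁺_{AB} ∧ v⁺_A| ≤ ‖A‖^{−2}‖B‖², and |v⁺_{BA} ∧ B v⁺_A| ≤ ‖A‖^{−2}‖B‖. -/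
open MeasureTheory Filter

noncomputable section

/-- `e(x) = exp(2πix)`. -/
def eF (x : ℝ) : ℂ := Complex.exp (2 * Real.pi * Complex.I * (x : ℂ))

/-- The annulus `𝒜_ρ = {z : 1 - ρ < |z| < 1 + ρ}`. -/
def annulus (ρ : ℝ) : Set ℂ := {z : ℂ | 1 - ρ < ‖z‖ ∧ ‖z‖ < 1 + ρ}

/-- Operator norm (w.r.t. the Euclidean norm on `ℝ²`) of a 2×2 real matrix. -/
def opNorm (M : Matrix (Fin 2) (Fin 2) ℝ) : ℝ :=
  ‖(Matrix.toEuclideanCLM (𝕜 := ℝ) (n := Fin 2)) M‖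

/-- One-step transfer matrix `A(x,E)`. -/
def Amat (V : ℝ → ℝ) (x E : ℝ) : Matrix (Fin 2) (Fin 2) ℝ := !![V x - E, -1; 1, 0]

/-- Monodromy matrix `M_N(x, ω, E) = ∏_{j=N}^{1} A(x + jω, E)`. -/
def Mon (V : ℝ → ℝ) : ℕ → ℝ → ℝ → ℝ → Matrix (Fin 2) (Fin 2) ℝ
  | 0, _, _, _ => 1
  | N + 1, x, ω, E => Amat V (x + ((N + 1 : ℕ) : ℝ) * ω) E * Mon V N x ω E

/-- Finite-volume Lyapunov exponent `L_N(ω, E)`. -/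
def LN (V : ℝ → ℝ) (N : ℕ) (ω E : ℝ) : ℝ :=
  (1 / (N : ℝ)) * ∫ x in (0:ℝ)..1, Real.log (opNorm (Mon V N x ω E))

/-- Lyapunov exponent `L(ω, E) = inf_N L_N(ω, E)`. -/
def Lyap (V : ℝ → ℝ) (ω E : ℝ) : ℝ := ⨅ N : ℕ, LN V (N + 1) ω E

/-- Distance to the nearest integer. -/
def distInt (x : ℝ) : ℝ := ⨅ k : ℤ, |x - (k : ℝ)|

/-- The Diophantine class `𝕋_{c,a}`. -/
def Tca (c a : ℝ) : Set ℝ :=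
  {ω ∈ Set.Icc (0:ℝ) 1 | ∀ n : ℕ, 2 ≤ n →
    c / ((n : ℝ) * Real.log n ^ a) ≤ distInt ((n : ℝ) * ω)}

/-- Dirichlet Schrödinger operator `H_N(x, ω)` on `[1, N]`. -/
def Hmat (V : ℝ → ℝ) (N : ℕ) (x ω : ℝ) : Matrix (Fin N) (Fin N) ℝ :=
  Matrix.of fun i j : Fin N =>
    if i = j then V (x + (((i : ℕ) : ℝ) + 1) * ω)
    else if (i : ℕ) + 1 = (j : ℕ) ∨ (j : ℕ) + 1 = (i : ℕ) then -1 else 0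

open scoped Classical in
/-- Number of eigenvalues (counted with multiplicity, via the characteristic
polynomial) of a real matrix lying in a set `s ⊆ ℝ`. -/
def specCount {n : ℕ} (M : Matrix (Fin n) (Fin n) ℝ) (s : Set ℝ) : ℕ :=
  Multiset.card (Multiset.filter (fun r => r ∈ s) M.charpoly.roots)

/-- Dirichlet determinant on `[a, b]` with complexified phase `z`. -/
def fInt (F : ℂ → ℂ) (a b : ℤ) (z : ℂ) (ω E : ℝ) : ℂ :=
  Matrix.det (Matrix.of fun i j : Fin ((b - a).toNat + 1) =>
    if i = j then F (z * eF (((a : ℝ) + (i : ℕ)) * ω)) - (E : ℂ)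
    else if (i : ℕ) + 1 = (j : ℕ) ∨ (j : ℕ) + 1 = (i : ℕ) then -1 else 0)

/-- Dirichlet determinant `f_N(z, ω, E)` with complexified phase `z`. -/
def fN (F : ℂ → ℂ) (N : ℕ) (z : ℂ) (ω E : ℝ) : ℂ :=
  Matrix.det (Matrix.of fun i j : Fin N =>
    if i = j then F (z * eF ((((i : ℕ) : ℝ) + 1) * ω)) - (E : ℂ)
    else if (i : ℕ) + 1 = (j : ℕ) ∨ (j : ℕ) + 1 = (i : ℕ) then -1 else 0)

-- Order of vanishing of `f` at `z` (as a natural number; junk value `0` at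
-- points where `f` is not analytic or vanishes identically).
open scoped Classical in
def zmult (f : ℂ → ℂ) (z : ℂ) : ℕ :=
  if h : AnalyticAt ℂ f z then (analyticOrderAt f z).toNat else 0

/-- Number of zeros of `f` in `s`, counted with multiplicity. -/
def nuCount (f : ℂ → ℂ) (s : Set ℂ) : ℕ := ∑ᶠ z ∈ s, zmult f z

/-- The double average `J(u, z₀, r₁, r₂)`. -/
def Jav (u : ℂ → ℝ) (z0 : ℂ) (r1 r2 : ℝ) : ℝ :=
  (1 / (Real.pi * r1 ^ 2)) *
    ∫ z in Metric.ball z0 r1,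
      ((1 / (Real.pi * r2 ^ 2)) * ∫ ζ in Metric.ball z r2, (u ζ - u z))

/-- The impurity matrix `D`. -/
def Dimp : Matrix (Fin 2) (Fin 2) ℝ := !![-1, 0; 0, 0]

/-- Monodromy with impurities at sites `k 1 < k 2 < ⋯ < k t`. -/
def MonImp (V : ℝ → ℝ) (n t : ℕ) (k : ℕ → ℕ) (x ω E : ℝ) : Matrix (Fin 2) (Fin 2) ℝ :=
  if t = 0 then Mon V n x ω E
  else
    Mon V (n - k t) (x + (k t : ℝ) * ω) ω E * Dimp *
      ((List.range (t - 1)).map (fun j =>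
        Mon V (k (t - j) - k (t - 1 - j) - 1) (x + (k (t - 1 - j) : ℝ) * ω) ω E * Dimp)).prod *
      Mon V (k 1 - 1) x ω E

/-- `L_n^{(k₁,…,k_t)}(ω, E)`. -/
def LNImp (V : ℝ → ℝ) (n t : ℕ) (k : ℕ → ℕ) (ω E : ℝ) : ℝ :=
  (1 / (n : ℝ)) * ∫ x in (0:ℝ)..1, Real.log (opNorm (MonImp V n t k x ω E))

/-- Dirichlet Schrödinger operator `H_{[-N,N]}(x, ω)`. -/
def HmatSym (V : ℝ → ℝ) (N : ℕ) (x ω : ℝ) : Matrix (Fin (2 * N + 1)) (Fin (2 * N + 1)) ℝ :=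
  Matrix.of fun i j : Fin (2 * N + 1) =>
    if i = j then V (x + (((i : ℕ) : ℝ) - (N : ℝ)) * ω)
    else if (i : ℕ) + 1 = (j : ℕ) ∨ (j : ℕ) + 1 = (i : ℕ) then -1 else 0

def wedge (u v : Fin 2 → ℝ) : ℝ := u 0 * v 1 - u 1 * v 0

def dot2 (u v : Fin 2 → ℝ) : ℝ := u 0 * v 0 + u 1 * v 1

def norm2 (u : Fin 2 → ℝ) : ℝ := Real.sqrt (u 0 ^ 2 + u 1 ^ 2)

/-- `(u⁺, u⁻, v⁺, v⁻)` is a singular frame for `M`. -/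
def IsSingularFrame (M : Matrix (Fin 2) (Fin 2) ℝ) (up um vp vm : Fin 2 → ℝ) : Prop :=
  norm2 up = 1 ∧ norm2 um = 1 ∧ norm2 vp = 1 ∧ norm2 vm = 1 ∧
  dot2 up um = 0 ∧ dot2 vp vm = 0 ∧
  M.mulVec up = opNorm M • vp ∧ M.mulVec um = (opNorm M)⁻¹ • vm

/-! Applying a matrix of determinant one (which preserves `wedge`) and the defining relations of
the singular frames, each of the four wedges becomes `(‖M‖ ‖A‖)⁻¹` times a wedge of two vectors of
length at most `1` or `‖B‖`, where `M = AB` or `M = BA`. Since `‖B⁻¹‖ = ‖B‖` on `SL(2,ℝ)`, we have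
`‖A‖ ≤ ‖M‖ ‖B‖`, i.e. `(‖M‖ ‖A‖)⁻¹ ≤ ‖B‖ / ‖A‖²`. -/

open Matrix

lemma norm2_nonneg (u : Fin 2 → ℝ) : 0 ≤ norm2 u := Real.sqrt_nonneg _

lemma norm2_sq (u : Fin 2 → ℝ) : norm2 u ^ 2 = u 0 ^ 2 + u 1 ^ 2 :=
  Real.sq_sqrt (by positivity)

lemma norm2_eq_norm_toLp (u : Fin 2 → ℝ) : norm2 u = ‖WithLp.toLp 2 u‖ := by
  simp [EuclideanSpace.norm_eq, norm2, Fin.sum_univ_two]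

lemma wedge_smul_left (c : ℝ) (u v : Fin 2 → ℝ) : wedge (c • u) v = c * wedge u v := by
  simp only [wedge, Pi.smul_apply, smul_eq_mul]; ring

lemma wedge_smul_right (c : ℝ) (u v : Fin 2 → ℝ) : wedge u (c • v) = c * wedge u v := by
  simp only [wedge, Pi.smul_apply, smul_eq_mul]; ring

lemma wedge_mulVec_mulVec (M : Matrix (Fin 2) (Fin 2) ℝ) (u v : Fin 2 → ℝ) :
    wedge (M *ᵥ u) (M *ᵥ v) = M.det * wedge u v := by
  simp only [wedge, mulVec, dotProduct, Fin.sum_univ_two, det_fin_two]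
  ring

lemma abs_wedge_le (u v : Fin 2 → ℝ) : |wedge u v| ≤ norm2 u * norm2 v := by
  have lagrange : wedge u v ^ 2 + dot2 u v ^ 2 = (norm2 u * norm2 v) ^ 2 := by
    rw [mul_pow, norm2_sq, norm2_sq, wedge, dot2]; ring
  refine abs_le_of_sq_le_sq ?_ (mul_nonneg (norm2_nonneg u) (norm2_nonneg v))
  nlinarith [sq_nonneg (dot2 u v)]

lemma norm2_mulVec_le (M : Matrix (Fin 2) (Fin 2) ℝ) (w : Fin 2 → ℝ) :
    norm2 (M *ᵥ w) ≤ opNorm M * norm2 w := by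
  rw [norm2_eq_norm_toLp, norm2_eq_norm_toLp, ← toEuclideanCLM_toLp]
  exact ContinuousLinearMap.le_opNorm _ _

lemma opNorm_le_of_norm2_mulVec_le {M : Matrix (Fin 2) (Fin 2) ℝ} {C : ℝ} (hC : 0 ≤ C)
    (h : ∀ w, norm2 (M *ᵥ w) ≤ C * norm2 w) : opNorm M ≤ C :=
  ContinuousLinearMap.opNorm_le_bound _ hC fun x => by
    simpa only [norm2_eq_norm_toLp, ← toEuclideanCLM_toLp] using h x.ofLp

lemma opNorm_mul_le (M N : Matrix (Fin 2) (Fin 2) ℝ) : opNorm (M * N) ≤ opNorm M * opNorm N := by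
  simp only [opNorm, map_mul]
  exact norm_mul_le _ _

lemma opNorm_pos_of_det_eq_one {M : Matrix (Fin 2) (Fin 2) ℝ} (hM : M.det = 1) : 0 < opNorm M := by
  refine (norm_nonneg _).lt_of_ne' fun h => ?_
  have hM0 : M = 0 := (map_eq_zero_iff _ toEuclideanCLM.injective).mp (norm_eq_zero.mp h)
  simp [hM0] at hM

lemma norm2_le_opNorm_mul_norm2_mulVec {M : Matrix (Fin 2) (Fin 2) ℝ} (hM : M.det = 1)
    (w : Fin 2 → ℝ) : norm2 w ≤ opNorm M * norm2 (M *ᵥ w) := by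
  set r : Fin 2 → ℝ := ![-w 1, w 0]
  have hr : norm2 r = norm2 w := by simp [norm2, r, add_comm]
  have hwr : wedge w r = norm2 w ^ 2 := by
    simp only [norm2_sq, wedge, r, cons_val_zero, cons_val_one]; ring
  rcases (norm2_nonneg w).eq_or_lt with hw | hw
  · rw [← hw]
    exact mul_nonneg (norm_nonneg _) (norm2_nonneg _)
  refine le_of_mul_le_mul_right ?_ hw
  calc norm2 w * norm2 w = |wedge (M *ᵥ w) (M *ᵥ r)| := by
        rw [wedge_mulVec_mulVec, hM, one_mul, hwr, abs_of_nonneg (sq_nonneg _), sq]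
    _ ≤ norm2 (M *ᵥ w) * norm2 (M *ᵥ r) := abs_wedge_le _ _
    _ ≤ norm2 (M *ᵥ w) * (opNorm M * norm2 w) := by
        rw [← hr]; gcongr; exacts [norm2_nonneg _, norm2_mulVec_le M r]
    _ = opNorm M * norm2 (M *ᵥ w) * norm2 w := by ring

lemma opNorm_inv_le {M : Matrix (Fin 2) (Fin 2) ℝ} (hM : M.det = 1) : opNorm M⁻¹ ≤ opNorm M :=
  opNorm_le_of_norm2_mulVec_le (norm_nonneg _) fun w => by
    simpa only [mulVec_mulVec, mul_nonsing_inv M (hM ▸ isUnit_one), one_mulVec]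
      using norm2_le_opNorm_mul_norm2_mulVec hM (M⁻¹ *ᵥ w)

lemma opNorm_le_opNorm_mul_right_mul_opNorm {B : Matrix (Fin 2) (Fin 2) ℝ} (hB : B.det = 1)
    (A : Matrix (Fin 2) (Fin 2) ℝ) : opNorm A ≤ opNorm (A * B) * opNorm B :=
  calc opNorm A = opNorm (A * B * B⁻¹) := by rw [mul_nonsing_inv_cancel_right B A (hB ▸ isUnit_one)]
    _ ≤ opNorm (A * B) * opNorm B⁻¹ := opNorm_mul_le _ _
    _ ≤ opNorm (A * B) * opNorm B := by gcongr; exacts [norm_nonneg _, opNorm_inv_le hB]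

lemma opNorm_le_opNorm_mul_left_mul_opNorm {B : Matrix (Fin 2) (Fin 2) ℝ} (hB : B.det = 1)
    (A : Matrix (Fin 2) (Fin 2) ℝ) : opNorm A ≤ opNorm (B * A) * opNorm B :=
  calc opNorm A = opNorm (B⁻¹ * (B * A)) := by
        rw [nonsing_inv_mul_cancel_left B A (hB ▸ isUnit_one)]
    _ ≤ opNorm B⁻¹ * opNorm (B * A) := opNorm_mul_le _ _
    _ ≤ opNorm B * opNorm (B * A) := by gcongr; exacts [norm_nonneg _, opNorm_inv_le hB]
    _ = opNorm (B * A) * opNorm B := mul_comm _ _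

lemma abs_inv_mul_inv_mul_le {a b m c x : ℝ} (ha : 0 < a) (hm : 0 < m) (hab : a ≤ m * b)
    (hx : |x| ≤ c) : |m⁻¹ * a⁻¹ * x| ≤ b * c / a ^ 2 := by
  have hc : 0 ≤ c := (abs_nonneg x).trans hx
  calc |m⁻¹ * a⁻¹ * x| = |x| / (m * a) := by
        rw [abs_mul, abs_of_pos (by positivity)]; ring
    _ ≤ c / (m * a) := by gcongr
    _ ≤ b * c / a ^ 2 := by
        rw [div_le_div_iff₀ (by positivity) (by positivity)]
        nlinarith [mul_nonneg (mul_nonneg hc ha.le) (sub_nonneg.2 hab)]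

lemma IsSingularFrame.vp_eq {M : Matrix (Fin 2) (Fin 2) ℝ} {up um vp vm : Fin 2 → ℝ}
    (hF : IsSingularFrame M up um vp vm) (hM : M.det = 1) : vp = (opNorm M)⁻¹ • M *ᵥ up := by
  obtain ⟨-, -, -, -, -, -, hup, -⟩ := hF
  rw [hup, inv_smul_smul₀ (opNorm_pos_of_det_eq_one hM).ne']

section SingularFramesOfProducts

variable {A B : Matrix (Fin 2) (Fin 2) ℝ} {upA umA vpA vmA : Fin 2 → ℝ}
  {upAB umAB vpAB vmAB upBA umBA vpBA vmBA : Fin 2 → ℝ}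

lemma abs_wedge_mulVec_umAB_umA_le (hA : A.det = 1) (hB : B.det = 1)
    (hFA : IsSingularFrame A upA umA vpA vmA)
    (hFAB : IsSingularFrame (A * B) upAB umAB vpAB vmAB) :
    |wedge (B *ᵥ umAB) umA| ≤ opNorm B / opNorm A ^ 2 := by
  obtain ⟨-, -, -, hvmA, -, -, -, humA⟩ := hFA
  obtain ⟨-, -, -, hvmAB, -, -, -, humAB⟩ := hFAB
  have hAB : (A * B).det = 1 := by rw [det_mul, hA, hB, one_mul]
  have key : wedge (B *ᵥ umAB) umA = (opNorm (A * B))⁻¹ * (opNorm A)⁻¹ * wedge vmAB vmA := by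
    rw [← one_mul (wedge _ _), ← hA, ← wedge_mulVec_mulVec, mulVec_mulVec, humAB, humA,
      wedge_smul_left, wedge_smul_right, mul_assoc]
  have hx : |wedge vmAB vmA| ≤ 1 := by simpa only [hvmAB, hvmA, mul_one] using abs_wedge_le vmAB vmA
  rw [key]
  simpa only [mul_one] using abs_inv_mul_inv_mul_le (opNorm_pos_of_det_eq_one hA)
    (opNorm_pos_of_det_eq_one hAB) (opNorm_le_opNorm_mul_right_mul_opNorm hB A) hx

lemma abs_wedge_umBA_umA_le (hA : A.det = 1) (hB : B.det = 1)
    (hFA : IsSingularFrame A upA umA vpA vmA)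
    (hFBA : IsSingularFrame (B * A) upBA umBA vpBA vmBA) :
    |wedge umBA umA| ≤ opNorm B ^ 2 / opNorm A ^ 2 := by
  obtain ⟨-, -, -, hvmA, -, -, -, humA⟩ := hFA
  obtain ⟨-, -, -, hvmBA, -, -, -, humBA⟩ := hFBA
  have hBA : (B * A).det = 1 := by rw [det_mul, hA, hB, one_mul]
  have key : wedge umBA umA = (opNorm (B * A))⁻¹ * (opNorm A)⁻¹ * wedge vmBA (B *ᵥ vmA) := by
    rw [← one_mul (wedge _ _), ← hBA, ← wedge_mulVec_mulVec, humBA, ← mulVec_mulVec, humA,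
      mulVec_smul, wedge_smul_left, wedge_smul_right, mul_assoc]
  have hx : |wedge vmBA (B *ᵥ vmA)| ≤ opNorm B := (abs_wedge_le _ _).trans <| by
    simpa only [hvmBA, hvmA, one_mul, mul_one] using norm2_mulVec_le B vmA
  rw [key, sq (opNorm B)]
  exact abs_inv_mul_inv_mul_le (opNorm_pos_of_det_eq_one hA)
    (opNorm_pos_of_det_eq_one hBA) (opNorm_le_opNorm_mul_left_mul_opNorm hB A) hx

lemma abs_wedge_vpAB_vpA_le (hA : A.det = 1) (hB : B.det = 1)
    (hFA : IsSingularFrame A upA umA vpA vmA)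
    (hFAB : IsSingularFrame (A * B) upAB umAB vpAB vmAB) :
    |wedge vpAB vpA| ≤ opNorm B ^ 2 / opNorm A ^ 2 := by
  have hAB : (A * B).det = 1 := by rw [det_mul, hA, hB, one_mul]
  have key : wedge vpAB vpA = (opNorm (A * B))⁻¹ * (opNorm A)⁻¹ * wedge (B *ᵥ upAB) upA := by
    rw [hFAB.vp_eq hAB, hFA.vp_eq hA, wedge_smul_left, wedge_smul_right, ← mulVec_mulVec,
      wedge_mulVec_mulVec, hA, one_mul, mul_assoc]
  have hx : |wedge (B *ᵥ upAB) upA| ≤ opNorm B := (abs_wedge_le _ _).trans <| by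
    simpa only [hFAB.1, hFA.1, mul_one] using norm2_mulVec_le B upAB
  rw [key, sq (opNorm B)]
  exact abs_inv_mul_inv_mul_le (opNorm_pos_of_det_eq_one hA)
    (opNorm_pos_of_det_eq_one hAB) (opNorm_le_opNorm_mul_right_mul_opNorm hB A) hx

lemma abs_wedge_vpBA_mulVec_vpA_le (hA : A.det = 1) (hB : B.det = 1)
    (hFA : IsSingularFrame A upA umA vpA vmA)
    (hFBA : IsSingularFrame (B * A) upBA umBA vpBA vmBA) :
    |wedge vpBA (B *ᵥ vpA)| ≤ opNorm B / opNorm A ^ 2 := by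
  have hBA : (B * A).det = 1 := by rw [det_mul, hA, hB, one_mul]
  have key : wedge vpBA (B *ᵥ vpA) = (opNorm (B * A))⁻¹ * (opNorm A)⁻¹ * wedge upBA upA := by
    rw [hFBA.vp_eq hBA, hFA.vp_eq hA, mulVec_smul, mulVec_mulVec, wedge_smul_left,
      wedge_smul_right, wedge_mulVec_mulVec, hBA, one_mul, mul_assoc]
  have hx : |wedge upBA upA| ≤ 1 := by
    simpa only [hFBA.1, hFA.1, mul_one] using abs_wedge_le upBA upA
  rw [key]
  simpa only [mul_one] using abs_inv_mul_inv_mul_le (opNorm_pos_of_det_eq_one hA)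
    (opNorm_pos_of_det_eq_one hBA) (opNorm_le_opNorm_mul_left_mul_opNorm hB A) hx

end SingularFramesOfProducts

theorem statement_7_general
    (A B : Matrix (Fin 2) (Fin 2) ℝ) (hA : A.det = 1) (hB : B.det = 1)
    (upA umA vpA vmA : Fin 2 → ℝ)
    (upAB umAB vpAB vmAB upBA umBA vpBA vmBA : Fin 2 → ℝ)
    (hFA : IsSingularFrame A upA umA vpA vmA)
    (hFAB : IsSingularFrame (A * B) upAB umAB vpAB vmAB)
    (hFBA : IsSingularFrame (B * A) upBA umBA vpBA vmBA) :
    |wedge (B.mulVec umAB) umA| ≤ opNorm B / opNorm A ^ 2 ∧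
    |wedge umBA umA| ≤ opNorm B ^ 2 / opNorm A ^ 2 ∧
    |wedge vpAB vpA| ≤ opNorm B ^ 2 / opNorm A ^ 2 ∧
    |wedge vpBA (B.mulVec vpA)| ≤ opNorm B / opNorm A ^ 2 :=
  ⟨abs_wedge_mulVec_umAB_umA_le hA hB hFA hFAB, abs_wedge_umBA_umA_le hA hB hFA hFBA,
    abs_wedge_vpAB_vpA_le hA hB hFA hFAB, abs_wedge_vpBA_mulVec_vpA_le hA hB hFA hFBA⟩

theorem statement_7
    (A B : Matrix (Fin 2) (Fin 2) ℝ) (hA : A.det = 1) (hB : B.det = 1)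
    (upA umA vpA vmA upB umB vpB vmB : Fin 2 → ℝ)
    (upAB umAB vpAB vmAB upBA umBA vpBA vmBA : Fin 2 → ℝ)
    (hFA : IsSingularFrame A upA umA vpA vmA)
    (hFB : IsSingularFrame B upB umB vpB vmB)
    (hFAB : IsSingularFrame (A * B) upAB umAB vpAB vmAB)
    (hFBA : IsSingularFrame (B * A) upBA umBA vpBA vmBA) :
    |wedge (B.mulVec umAB) umA| ≤ opNorm B / opNorm A ^ 2 ∧
    |wedge umBA umA| ≤ opNorm B ^ 2 / opNorm A ^ 2 ∧
    |wedge vpAB vpA| ≤ opNorm B ^ 2 / opNorm A ^ 2 ∧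
    |wedge vpBA (B.mulVec vpA)| ≤ opNorm B / opNorm A ^ 2 :=
  statement_7_general A B hA hB upA umA vpA vmA upAB umAB vpAB vmAB upBA umBA vpBA vmBA hFA hFAB
    hFBA

end
end

section
/- Let r > 0, η > 0, and let φ be analytic on the disk D(0, r) ⊂ ℂ. Then the two-dimensional Lebesgue measure of the image set { w ∈ ℂ : w = φ(z) for some z ∈ D(0, r) with |φ′(z)| < η } is at most π·r²·η². -/
/-!
The change-of-variables inequality bounds `vol (φ '' s)` by `∫ₛ |det Dφ|`, and the real
Jacobian of a holomorphic map is `|φ'|²`, which is below `η²` on `s`; finally `s ⊆ D(0, r)`.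
-/

open MeasureTheory Filter

noncomputable section

theorem Complex.det_restrictScalars_toSpanSingleton (c : ℂ) :
    ((ContinuousLinearMap.toSpanSingleton ℂ c).restrictScalars ℝ).det = Complex.normSq c := by
  simp [ContinuousLinearMap.det, LinearMap.det_restrictScalars, Algebra.norm_complex_apply]

theorem Complex.volume_image_le_of_norm_deriv_le {f f' : ℂ → ℂ} {s : Set ℂ} {C : ℝ}
    (hs : MeasurableSet s) (hf : ∀ z ∈ s, HasDerivWithinAt f (f' z) s z)
    (hC : ∀ z ∈ s, ‖f' z‖ ≤ C) :
    volume (f '' s) ≤ ENNReal.ofReal (C ^ 2) * volume s := by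
  have hf_real : ∀ z ∈ s, HasFDerivWithinAt f
      ((ContinuousLinearMap.toSpanSingleton ℂ (f' z)).restrictScalars ℝ) s z := fun z hz =>
    (hf z hz).hasFDerivWithinAt.restrictScalars ℝ
  calc volume (f '' s)
      ≤ ∫⁻ z in s, ENNReal.ofReal
          |((ContinuousLinearMap.toSpanSingleton ℂ (f' z)).restrictScalars ℝ).det| :=
        addHaar_image_le_lintegral_abs_det_fderiv volume hs hf_real
    _ ≤ ∫⁻ _ in s, ENNReal.ofReal (C ^ 2) := by
        refine setLIntegral_mono measurable_const fun z hz => ENNReal.ofReal_le_ofReal ?_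
        rw [det_restrictScalars_toSpanSingleton, abs_of_nonneg (normSq_nonneg _),
          ← Complex.sq_norm]
        exact pow_le_pow_left₀ (norm_nonneg _) (hC z hz) 2
    _ = ENNReal.ofReal (C ^ 2) * volume s := setLIntegral_const s _

theorem Complex.volume_ball_le (a : ℂ) (r : ℝ) :
    volume (Metric.ball a r) ≤ ENNReal.ofReal (Real.pi * r ^ 2) := by
  rcases le_or_gt r 0 with hr | hr
  · simp [Metric.ball_eq_empty.mpr hr]
  · rw [Complex.volume_ball, ← ENNReal.ofReal_pow hr.le, ← ENNReal.ofReal_coe_nnreal,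
      ← ENNReal.ofReal_mul (by positivity), NNReal.coe_real_pi, mul_comm]

theorem statement_18_general
    (r η : ℝ)
    (φ : ℂ → ℂ) (hφ : AnalyticOnNhd ℂ φ (Metric.ball 0 r)) :
    volume (φ '' {z ∈ Metric.ball (0:ℂ) r | ‖deriv φ z‖ < η}) ≤
      ENNReal.ofReal (Real.pi * r ^ 2 * η ^ 2) := by
  set s := {z ∈ Metric.ball (0:ℂ) r | ‖deriv φ z‖ < η}
  have hs : MeasurableSet s :=
    measurableSet_ball.inter (measurableSet_lt (measurable_deriv φ).norm measurable_const)
  have hφ' : ∀ z ∈ s, HasDerivWithinAt φ (deriv φ z) s z := fun z hz =>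
    (hφ z hz.1).differentiableAt.hasDerivAt.hasDerivWithinAt
  calc volume (φ '' s)
      ≤ ENNReal.ofReal (η ^ 2) * volume s :=
        Complex.volume_image_le_of_norm_deriv_le hs hφ' fun z hz => hz.2.le
    _ ≤ ENNReal.ofReal (η ^ 2) * ENNReal.ofReal (Real.pi * r ^ 2) :=
        mul_le_mul_right ((measure_mono (Set.sep_subset _ _)).trans
          (Complex.volume_ball_le 0 r)) _
    _ = ENNReal.ofReal (Real.pi * r ^ 2 * η ^ 2) := by
        rw [← ENNReal.ofReal_mul (sq_nonneg η), mul_comm]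

theorem statement_18
    (r η : ℝ) (hr : 0 < r) (hη : 0 < η)
    (φ : ℂ → ℂ) (hφ : AnalyticOnNhd ℂ φ (Metric.ball 0 r)) :
    volume (φ '' {z ∈ Metric.ball (0:ℂ) r | ‖deriv φ z‖ < η}) ≤
      ENNReal.ofReal (Real.pi * r ^ 2 * η ^ 2) :=
  statement_18_general r η φ hφ

end
end
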